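/- arXiv:1703.10999 — 3 statements merged into one kernel-verified Lean document; each statement's English description precedes it below -/
import Mathlib

section
/- Let G be a compact quantum group acting on A via α, λ an irreducible representation, and a ∈ A an element of the λ-isotypical component with α(a) = ∑_{s} u^λ_{ks} ⊗ a_s for some fixed k. Then 1 ⊗ a = ∑_{s,t} ((u^λ_{st})* ⊗ 1) · (α ∘ E^λ_{st})(a) in C(G) ⊗ A; in particular 1 ⊗ a lies in the closed linear span of (C(G) ⊗ 1)·α(A). -/
open TensorProduct

/-- Slicing the first tensor factor by a linear functional: `(f ⊗ id) : C ⊗ A → A`. -/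
noncomputable def sliceLeft {C A : Type*} [AddCommGroup C] [Module ℂ C]
    [AddCommGroup A] [Module ℂ A] (f : C →ₗ[ℂ] ℂ) : C ⊗[ℂ] A →ₗ[ℂ] A :=
  (TensorProduct.lid ℂ A).toLinearMap ∘ₗ (LinearMap.rTensor A f)

/-- Let `G` be a compact quantum group acting on `A` via `α`, `λ` an
irreducible representation, and `a ∈ A` an element of the `λ`-isotypical component with
`α(a) = ∑_s u^λ_{ks} ⊗ a_s`.  Then
`1 ⊗ a = ∑_{s,t} ((u^λ_{st})* ⊗ 1) · (α ∘ E^λ_{st})(a)` in `C(G) ⊗ A`; in particular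
`1 ⊗ a` lies in the (closed) linear span of `(C(G) ⊗ 1)·α(A)`. -/
theorem one_tensor_mem_span_of_isotypical
    {C : Type*} [CStarAlgebra C] {A : Type*} [NonUnitalCStarAlgebra A]
    -- the Hopf *-algebra structure on the matrix coefficients:
    (Δ : C →ₗ[ℂ] C ⊗[ℂ] C) (ε : C →ₗ[ℂ] ℂ) (S : C →ₗ[ℂ] C)
    (hHopf : ∀ x : C, (LinearMap.mul' ℂ C) ((LinearMap.rTensor C S) (Δ x)) = ε x • (1 : C))
    {n : ℕ} (u : Fin n → Fin n → C)
    (hΔu : ∀ i j, Δ (u i j) = ∑ k, u i k ⊗ₜ[ℂ] u k j)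
    (hεu : ∀ i j, ε (u i j) = if i = j then 1 else 0)
    (hSu : ∀ s t, S (u s t) = star (u t s))
    -- the action and the isotypical element:
    (α : A →ₗ[ℂ] C ⊗[ℂ] A) (a : A) (k : Fin n) (f : Fin n → A)
    (hak : a = f k)
    (hαf : ∀ s, α (f s) = ∑ j, u s j ⊗ₜ[ℂ] f j)
    -- the spectral "matrix units" `E^λ_{st}`:
    (E : Fin n → Fin n → A →ₗ[ℂ] A)
    (hE : ∀ s t, E s t a = if t = k then f s else 0) :
    (1 : C) ⊗ₜ[ℂ] a
      = ∑ s, ∑ t, (LinearMap.rTensor A (LinearMap.mulLeft ℂ (star (u s t)))) (α (E s t a)) ∧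
    (1 : C) ⊗ₜ[ℂ] a ∈ Submodule.span ℂ
      {z : C ⊗[ℂ] A | ∃ (x : C) (b : A),
        z = (LinearMap.rTensor A (LinearMap.mulLeft ℂ x)) (α b)} := by

  have key : ∀ j, ∑ s, star (u s k) * u s j = (if k = j then (1:C) else 0) := by
    intro j
    have h := hHopf (u k j)
    rw [hΔu] at h
    simp only [map_sum, LinearMap.rTensor_tmul, LinearMap.mul'_apply, hSu, hεu] at h
    rw [h]
    split <;> simp
  have main : (1 : C) ⊗ₜ[ℂ] a
      = ∑ s, ∑ t, (LinearMap.rTensor A (LinearMap.mulLeft ℂ (star (u s t)))) (α (E s t a)) := by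
    have : ∀ s t, (LinearMap.rTensor A (LinearMap.mulLeft ℂ (star (u s t)))) (α (E s t a))
        = if t = k then ∑ j, (star (u s t) * u s j) ⊗ₜ[ℂ] f j else 0 := by
      intro s t
      rw [hE]
      split
      · subst ‹t = k›
        rw [hαf]
        simp [LinearMap.rTensor_tmul]
      · simp
    simp only [this, Finset.sum_ite_eq', Finset.mem_univ, if_true]
    rw [Finset.sum_comm]
    simp only [← TensorProduct.sum_tmul, key]
    simp [hak, TensorProduct.ite_tmul]
  refine ⟨main, ?_⟩
  rw [main]
  apply Submodule.sum_mem
  intro s _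
  apply Submodule.sum_mem
  intro t _
  exact Submodule.subset_span ⟨star (u s t), E s t a, rfl⟩
end

section
/- Let θ: A → B and ψ: B → C be *-homomorphisms between C*-algebras. Then dim_oz(ψ ∘ θ) + 1 ≤ (dim_oz(ψ) + 1)·(dim_oz(θ) + 1), where dim_oz denotes order zero dimension. -/
/-- Complete positivity of a linear map between C*-algebras. -/
def IsCompletelyPositive {A B : Type*} [NonUnitalCStarAlgebra A] [NonUnitalCStarAlgebra B]
    (φ : A →ₗ[ℂ] B) : Prop :=
  ∀ (n : ℕ) (x : Matrix (Fin n) (Fin n) A), (∃ y : Matrix (Fin n) (Fin n) A, x = star y * y) →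
    ∃ z : Matrix (Fin n) (Fin n) B, x.map φ = star z * z

/-- A linear map between C*-algebras is order zero if it preserves orthogonality of
positive elements. -/
def IsOrderZero {A B : Type*} [NonUnitalCStarAlgebra A] [NonUnitalCStarAlgebra B]
    (φ : A →ₗ[ℂ] B) : Prop :=
  ∀ a b : A, (∃ x, a = star x * x) → (∃ y, b = star y * y) → a * b = 0 → φ a * φ b = 0

/-- `DimOzLE θ d` expresses that the *-homomorphism `θ : A → B` has order zero dimension
at most `d`: there are `d + 1` completely positive contractive order zero (approximately)
`A`-bimodule maps `B → A` whose sum is contractive and approximately splits `θ` on any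
prescribed finite set.  (This is the finitary reformulation, via countable saturation of
ultrapowers, of the existence of an exact splitting `B → ∏_U A` through the diagonal
embedding.) -/
def DimOzLE {A B : Type*} [NonUnitalCStarAlgebra A] [NonUnitalCStarAlgebra B]
    (θ : A →⋆ₙₐ[ℂ] B) (d : ℕ) : Prop :=
  ∀ (F : Finset A) (G : Finset B) (ε : ℝ), 0 < ε →
    ∃ ψ : Fin (d + 1) → (B →ₗ[ℂ] A),
      (∀ j, IsCompletelyPositive (ψ j) ∧ (∀ b, ‖ψ j b‖ ≤ ‖b‖) ∧ IsOrderZero (ψ j)) ∧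
      (∀ b : B, ‖∑ j, ψ j b‖ ≤ ‖b‖) ∧
      (∀ j, ∀ a ∈ F, ∀ b ∈ G,
        ‖ψ j (θ a * b) - a * ψ j b‖ ≤ ε ∧ ‖ψ j (b * θ a) - ψ j b * a‖ ≤ ε) ∧
      (∀ a ∈ F, ‖(∑ j, ψ j (θ a)) - a‖ ≤ ε)

/-!
Given approximate splittings `p i : B → A` of `θ` and `q j : C → B` of `ψ`, the
`(d + 1)(e + 1)` composites `p i ∘ q j` approximately split `ψ ∘ θ`: composites of completely
positive contractive order zero maps are again such maps, `∑ i, ∑ j, p i ∘ q j = (∑ p) ∘ (∑ q)`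
is contractive, and each defect of a composite is at most the defect of `q j` (transported by
the contraction `p i`) plus the defect of `p i`, provided the `p i` are chosen for the finite
set of elements `q j c` produced by the first step.
-/

section

variable {A B C : Type*} [NonUnitalCStarAlgebra A] [NonUnitalCStarAlgebra B]
  [NonUnitalCStarAlgebra C]

theorem IsCompletelyPositive.exists_map_eq_star_mul_self {φ : A →ₗ[ℂ] B}
    (hφ : IsCompletelyPositive φ) {a : A} (ha : ∃ x, a = star x * x) :
    ∃ z, φ a = star z * z := by
  obtain ⟨x, rfl⟩ := ha
  obtain ⟨z, hz⟩ := hφ 1 (Matrix.of fun _ _ => star x * x)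
    ⟨Matrix.of fun _ _ => x, by ext i j; simp [Matrix.mul_apply]⟩
  exact ⟨z 0 0, by simpa [Matrix.mul_apply] using congrFun (congrFun hz 0) 0⟩

theorem IsCompletelyPositive.comp {φ : A →ₗ[ℂ] B} {ψ : B →ₗ[ℂ] C}
    (hψ : IsCompletelyPositive ψ) (hφ : IsCompletelyPositive φ) :
    IsCompletelyPositive (ψ ∘ₗ φ) := by
  intro n x hx
  obtain ⟨z, hz⟩ := hφ n x hx
  obtain ⟨w, hw⟩ := hψ n (x.map φ) ⟨z, hz⟩
  exact ⟨w, by rw [← hw, Matrix.map_map]; rfl⟩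

theorem IsOrderZero.comp {φ : A →ₗ[ℂ] B} {ψ : B →ₗ[ℂ] C} (hψ : IsOrderZero ψ)
    (hφ : IsOrderZero φ) (hφ_cp : IsCompletelyPositive φ) : IsOrderZero (ψ ∘ₗ φ) :=
  fun a b ha hb hab => hψ _ _ (hφ_cp.exists_map_eq_star_mul_self ha)
    (hφ_cp.exists_map_eq_star_mul_self hb) (hφ a b ha hb hab)

theorem LinearMap.norm_map_sub_le_add {E F : Type*} [SeminormedAddCommGroup E]
    [SeminormedAddCommGroup F] [Module ℂ E] [Module ℂ F] {p : E →ₗ[ℂ] F}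
    (hp : ∀ x, ‖p x‖ ≤ ‖x‖) {x y : E} {z : F} {η δ : ℝ} (hxy : ‖x - y‖ ≤ η)
    (hyz : ‖p y - z‖ ≤ δ) : ‖p x - z‖ ≤ η + δ :=
  calc ‖p x - z‖ = ‖p (x - y) + (p y - z)‖ := by rw [map_sub, sub_add_sub_cancel]
    _ ≤ ‖p (x - y)‖ + ‖p y - z‖ := norm_add_le _ _
    _ ≤ η + δ := add_le_add ((hp _).trans hxy) hyz

structure IsApproxSplitting {ι : Type*} [Fintype ι] (θ : A →⋆ₙₐ[ℂ] B) (F : Finset A)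
    (G : Finset B) (ε : ℝ) (ψ : ι → (B →ₗ[ℂ] A)) : Prop where
  completelyPositive : ∀ j, IsCompletelyPositive (ψ j)
  norm_apply_le : ∀ j b, ‖ψ j b‖ ≤ ‖b‖
  orderZero : ∀ j, IsOrderZero (ψ j)
  norm_sum_apply_le : ∀ b, ‖∑ j, ψ j b‖ ≤ ‖b‖
  norm_map_mul_sub_le : ∀ j, ∀ a ∈ F, ∀ b ∈ G, ‖ψ j (θ a * b) - a * ψ j b‖ ≤ ε
  norm_map_mul_sub_le' : ∀ j, ∀ a ∈ F, ∀ b ∈ G, ‖ψ j (b * θ a) - ψ j b * a‖ ≤ ε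
  norm_sum_apply_map_sub_le : ∀ a ∈ F, ‖(∑ j, ψ j (θ a)) - a‖ ≤ ε

theorem dimOzLE_iff (θ : A →⋆ₙₐ[ℂ] B) (d : ℕ) :
    DimOzLE θ d ↔ ∀ (F : Finset A) (G : Finset B) (ε : ℝ), 0 < ε →
      ∃ ψ : Fin (d + 1) → (B →ₗ[ℂ] A), IsApproxSplitting θ F G ε ψ := by
  refine forall₄_congr fun F G ε _ => exists_congr fun ψ => ⟨?_, ?_⟩
  · rintro ⟨hcpc, hsum, hmod, hsplit⟩
    exact ⟨fun j => (hcpc j).1, fun j => (hcpc j).2.1, fun j => (hcpc j).2.2, hsum,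
      fun j a ha b hb => (hmod j a ha b hb).1, fun j a ha b hb => (hmod j a ha b hb).2, hsplit⟩
  · rintro ⟨hcp, hnorm, hoz, hsum, hmod, hmod', hsplit⟩
    exact ⟨fun j => ⟨hcp j, hnorm j, hoz j⟩, hsum,
      fun j a ha b hb => ⟨hmod j a ha b hb, hmod' j a ha b hb⟩, hsplit⟩

namespace IsApproxSplitting

variable {ι κ : Type*} [Fintype ι] [Fintype κ]

theorem comp_equiv {θ : A →⋆ₙₐ[ℂ] B} {F : Finset A} {G : Finset B} {ε : ℝ}
    {ψ : ι → (B →ₗ[ℂ] A)} (h : IsApproxSplitting θ F G ε ψ) (e : κ ≃ ι) :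
    IsApproxSplitting θ F G ε (ψ ∘ e) where
  completelyPositive j := h.completelyPositive (e j)
  norm_apply_le j := h.norm_apply_le (e j)
  orderZero j := h.orderZero (e j)
  norm_sum_apply_le b := by simpa [e.sum_comp (fun j => ψ j b)] using h.norm_sum_apply_le b
  norm_map_mul_sub_le j := h.norm_map_mul_sub_le (e j)
  norm_map_mul_sub_le' j := h.norm_map_mul_sub_le' (e j)
  norm_sum_apply_map_sub_le a ha := by
    simpa [e.sum_comp (fun j => ψ j (θ a))] using h.norm_sum_apply_map_sub_le a ha

theorem comp {θ : A →⋆ₙₐ[ℂ] B} {ψ : B →⋆ₙₐ[ℂ] C} {F : Finset A} {F' G' : Finset B}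
    {G : Finset C} {δ η : ℝ} {p : ι → (B →ₗ[ℂ] A)} {q : κ → (C →ₗ[ℂ] B)}
    (hp : IsApproxSplitting θ F G' δ p) (hq : IsApproxSplitting ψ F' G η q)
    (hF : ∀ a ∈ F, θ a ∈ F') (hG : ∀ j, ∀ c ∈ G, q j c ∈ G') :
    IsApproxSplitting (ψ.comp θ) F G (η + δ) fun ij : ι × κ => p ij.1 ∘ₗ q ij.2 := by
  have sum_comp (c : C) : ∑ ij : ι × κ, p ij.1 (q ij.2 c) = (∑ i, p i) (∑ j, q j c) := by
    simp only [Fintype.sum_prod_type, LinearMap.sum_apply, map_sum]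
    exact Finset.sum_comm
  have hP : ∀ b, ‖(∑ i, p i) b‖ ≤ ‖b‖ := by simpa using hp.norm_sum_apply_le
  refine
    { completelyPositive := fun ij =>
        (hp.completelyPositive ij.1).comp (hq.completelyPositive ij.2)
      norm_apply_le := fun ij c => (hp.norm_apply_le ij.1 _).trans (hq.norm_apply_le ij.2 c)
      orderZero := fun ij =>
        (hp.orderZero ij.1).comp (hq.orderZero ij.2) (hq.completelyPositive ij.2)
      norm_sum_apply_le := fun c => ?_
      norm_map_mul_sub_le := fun ij a ha c hc => ?_
      norm_map_mul_sub_le' := fun ij a ha c hc => ?_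
      norm_sum_apply_map_sub_le := fun a ha => ?_ }
  · simpa only [LinearMap.comp_apply, sum_comp] using
      (hP _).trans (hq.norm_sum_apply_le c)
  · exact LinearMap.norm_map_sub_le_add (hp.norm_apply_le ij.1)
      (hq.norm_map_mul_sub_le ij.2 _ (hF a ha) c hc)
      (hp.norm_map_mul_sub_le ij.1 a ha _ (hG ij.2 c hc))
  · exact LinearMap.norm_map_sub_le_add (hp.norm_apply_le ij.1)
      (hq.norm_map_mul_sub_le' ij.2 _ (hF a ha) c hc)
      (hp.norm_map_mul_sub_le' ij.1 a ha _ (hG ij.2 c hc))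
  · simp only [LinearMap.comp_apply, sum_comp]
    exact LinearMap.norm_map_sub_le_add hP (hq.norm_sum_apply_map_sub_le _ (hF a ha))
      (by simpa using hp.norm_sum_apply_map_sub_le a ha)

end IsApproxSplitting

end

/-- For *-homomorphisms `θ : A → B` and `ψ : B → C` between
C*-algebras, `dim_oz(ψ ∘ θ) + 1 ≤ (dim_oz(ψ) + 1) · (dim_oz(θ) + 1)`. -/
theorem dimOz_comp {A B C : Type*}
    [NonUnitalCStarAlgebra A] [NonUnitalCStarAlgebra B] [NonUnitalCStarAlgebra C]
    (θ : A →⋆ₙₐ[ℂ] B) (ψ : B →⋆ₙₐ[ℂ] C) (d e : ℕ)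
    (hθ : DimOzLE θ d) (hψ : DimOzLE ψ e) :
    DimOzLE (ψ.comp θ) ((d + 1) * (e + 1) - 1) := by
  classical
  rw [dimOzLE_iff] at hθ hψ ⊢
  intro F G ε hε
  obtain ⟨q, hq⟩ := hψ (F.image θ) G (ε / 2) (half_pos hε)
  obtain ⟨p, hp⟩ := hθ F (Finset.univ.biUnion fun j => G.image (q j)) (ε / 2) (half_pos hε)
  have hG : ∀ j, ∀ c ∈ G, q j c ∈ Finset.univ.biUnion fun j => G.image (q j) :=
    fun j c hc => Finset.mem_biUnion.2 ⟨j, Finset.mem_univ j, Finset.mem_image_of_mem _ hc⟩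
  have hcard : (d + 1) * (e + 1) - 1 + 1 = (d + 1) * (e + 1) :=
    Nat.sub_add_cancel (Nat.one_le_iff_ne_zero.2 (by positivity))
  have h := (hp.comp hq (fun a => Finset.mem_image_of_mem θ) hG).comp_equiv
    ((finCongr hcard).trans finProdFinEquiv.symm)
  rw [add_halves] at h
  exact ⟨_, h⟩
end

section
/- Let A, B be C*-algebras, θ: A → B an injective *-homomorphism with dim_oz(θ) ≤ d, witnessed by completely positive contractive order zero maps ψ₀, …, ψ_d: B → ∏_U A whose sum ψ composed with θ is the diagonal embedding. If B has nuclear dimension at most m, then A has nuclear dimension at most (d+1)(m+1) − 1. -/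
/-- `NucDimLE B m`: the C*-algebra `B` has nuclear dimension at most `m`: completely
positive approximations through finite-dimensional C*-algebras where the downward maps
decompose into `m + 1` completely positive contractive order zero summands. -/
def NucDimLE (B : Type*) [NonUnitalCStarAlgebra B] (m : ℕ) : Prop :=
  ∀ (F : Finset B) (ε : ℝ), 0 < ε →
    ∃ (E : Type) (_ : NonUnitalCStarAlgebra E) (_ : FiniteDimensional ℂ E)
      (φ : B →ₗ[ℂ] E) (η : Fin (m + 1) → (E →ₗ[ℂ] B)),
      IsCompletelyPositive φ ∧ (∀ b, ‖φ b‖ ≤ ‖b‖) ∧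
      (∀ j, IsCompletelyPositive (η j) ∧ (∀ x, ‖η j x‖ ≤ ‖x‖) ∧ IsOrderZero (η j)) ∧
      ∀ b ∈ F, ‖(∑ j, η j (φ b)) - b‖ < ε

section AuxCPOZ
variable {A B C : Type*} [NonUnitalCStarAlgebra A] [NonUnitalCStarAlgebra B]
  [NonUnitalCStarAlgebra C]

lemma cp_pos {φ : A →ₗ[ℂ] B} (hφ : IsCompletelyPositive φ) {a : A}
    (ha : ∃ y, a = star y * y) : ∃ x, φ a = star x * x := by
  obtain ⟨y, hy⟩ := ha
  have hX : (Matrix.of fun _ _ => a : Matrix (Fin 1) (Fin 1) A)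
      = star (Matrix.of fun _ _ => y) * (Matrix.of fun _ _ => y) := by
    ext i j
    simp [Matrix.mul_apply, Fin.sum_univ_one, hy, Matrix.star_apply]
  obtain ⟨z, hz⟩ := hφ 1 _ ⟨_, hX⟩
  refine ⟨z 0 0, ?_⟩
  have := congrFun (congrFun hz 0) 0
  simpa [Matrix.mul_apply, Fin.sum_univ_one, Matrix.star_apply, Matrix.map_apply] using this

lemma cp_comp {φ : A →ₗ[ℂ] B} {ψ : B →ₗ[ℂ] C} (hφ : IsCompletelyPositive φ)
    (hψ : IsCompletelyPositive ψ) : IsCompletelyPositive (ψ.comp φ) := by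
  intro n x hx
  obtain ⟨z, hz⟩ := hφ n x hx
  obtain ⟨w, hw⟩ := hψ n (star z * z) ⟨z, rfl⟩
  refine ⟨w, ?_⟩
  have : x.map (ψ.comp φ) = (x.map φ).map ψ := by
    rw [Matrix.map_map]; rfl
  rw [this, hz, hw]

lemma oz_comp {φ : A →ₗ[ℂ] B} {ψ : B →ₗ[ℂ] C} (hφcp : IsCompletelyPositive φ)
    (hφoz : IsOrderZero φ) (hψoz : IsOrderZero ψ) : IsOrderZero (ψ.comp φ) := by
  intro a b ha hb hab
  exact hψoz (φ a) (φ b) (cp_pos hφcp ha) (cp_pos hφcp hb) (hφoz a b ha hb hab)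

end AuxCPOZ

/-- Let `θ : A → B` be an injective *-homomorphism between C*-algebras
with `dim_oz(θ) ≤ d`, witnessed by completely positive contractive order zero maps
`ψ₀, …, ψ_d : B → ∏_U A` whose sum composed with `θ` is the diagonal embedding.  If `B`
has nuclear dimension at most `m`, then `A` has nuclear dimension at most
`(d+1)(m+1) − 1`. -/
theorem nuclear_dimension_le_of_dimOz
    {A B : Type*} [NonUnitalCStarAlgebra A] [NonUnitalCStarAlgebra B]
    (θ : A →⋆ₙₐ[ℂ] B) (hinj : Function.Injective θ)
    (d : ℕ) (hθ : DimOzLE θ d) (m : ℕ) (hB : NucDimLE B m) :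
    NucDimLE A ((d + 1) * (m + 1) - 1) := by
  classical
  intro F ε hε
  have hε2 : 0 < ε / 2 := by positivity
  obtain ⟨ψ, hψprops, hψsum, -, hψapprox⟩ := hθ F ∅ (ε / 2) hε2
  obtain ⟨E, instE, finE, φ, ηB, hφcp, hφc, hηB, happrox⟩ := hB (F.image θ) (ε / 2) hε2
  -- θ as a linear map
  let θlin : A →ₗ[ℂ] B :=
    { toFun := θ, map_add' := map_add θ, map_smul' := map_smul θ }
  have hθcp : IsCompletelyPositive θlin := by
    intro n x ⟨y, hy⟩
    refine ⟨y.map θ, ?_⟩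
    ext i j
    simp only [Matrix.map_apply, hy, Matrix.mul_apply, Matrix.star_apply, map_sum, map_mul,
      map_star]
    exact Finset.sum_congr rfl fun k _ => by
      show θ _ = _; rw [map_mul, map_star]
  have hθc : ∀ a : A, ‖θlin a‖ ≤ ‖a‖ := fun a => NonUnitalStarAlgHom.norm_apply_le θ a
  have hn : (d + 1) * (m + 1) - 1 + 1 = (d + 1) * (m + 1) :=
    Nat.sub_add_cancel (Nat.succ_le_of_lt (Nat.mul_pos d.succ_pos m.succ_pos))
  let e : Fin ((d + 1) * (m + 1) - 1 + 1) ≃ Fin (d + 1) × Fin (m + 1) :=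
    (finCongr hn).trans finProdFinEquiv.symm
  refine ⟨E, instE, finE, φ.comp θlin, fun k => (ψ (e k).1).comp (ηB (e k).2),
    cp_comp hθcp hφcp, fun a => (hφc (θlin a)).trans (hθc a), fun k => ?_, fun a haF => ?_⟩
  · obtain ⟨hcp, hc, hoz⟩ := hηB (e k).2
    obtain ⟨hcp', hc', hoz'⟩ := hψprops (e k).1
    exact ⟨cp_comp hcp hcp', fun x => (hc' _).trans (hc x),
      oz_comp hcp hoz hoz'⟩
  · set b : E := φ (θ a) with hb
    have hsum : ∑ k, ((ψ (e k).1).comp (ηB (e k).2)) ((φ.comp θlin) a)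
        = ∑ i, ψ i (∑ j, ηB j b) := by
      simp only [LinearMap.comp_apply]
      refine (Equiv.sum_comp e (fun p : Fin (d+1) × Fin (m+1) => ψ p.1 (ηB p.2 b))).trans ?_
      rw [Fintype.sum_prod_type]
      exact Finset.sum_congr rfl fun i _ => (map_sum (ψ i) _ _).symm
    rw [hsum]
    have h1 : ‖(∑ j, ηB j b) - θ a‖ < ε / 2 :=
      happrox (θ a) (Finset.mem_image_of_mem θ haF)
    have h2 : ‖(∑ i, ψ i (θ a)) - a‖ ≤ ε / 2 := hψapprox a haF
    have key : (∑ i, ψ i (∑ j, ηB j b)) - a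
        = (∑ i, ψ i ((∑ j, ηB j b) - θ a)) + ((∑ i, ψ i (θ a)) - a) := by
      simp only [map_sub, Finset.sum_sub_distrib]
      abel
    calc ‖(∑ i, ψ i (∑ j, ηB j b)) - a‖
        ≤ ‖∑ i, ψ i ((∑ j, ηB j b) - θ a)‖ + ‖(∑ i, ψ i (θ a)) - a‖ := by
          rw [key]; exact norm_add_le _ _
      _ ≤ ‖(∑ j, ηB j b) - θ a‖ + ε / 2 := add_le_add (hψsum _) h2
      _ < ε / 2 + ε / 2 := by linarith
      _ = ε := by ring
end
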